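/- Every Fröberg sequence h_• = |n; d_1,...,d_m| is the Hilbert function of R/K for some almost reverse lexicographic ideal K in a polynomial ring R = k[x_1,...,x_l] (l = n if n ≥ 1, l = 1 if n = 0); in particular every Fröberg sequence is unimodal at each tail. -/

import Mathlib

open scoped Classical

/-- Degree of an exponent vector (monomial). -/
def mdeg {n : ℕ} (m : Fin n → ℕ) : ℕ := ∑ i, m i

/-- Degree reverse lexicographic order: `M > N`. -/
def RevLexGT {n : ℕ} (M N : Fin n → ℕ) : Prop :=
  mdeg N < mdeg M ∨
    (mdeg M = mdeg N ∧ ∃ s : Fin n, (∀ i : Fin n, s < i → M i = N i) ∧ M s < N s)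

/-- A monomial ideal, identified with its set of monomials (exponent vectors),
is upward closed under divisibility. -/
def MonIdeal {n : ℕ} (I : Set (Fin n → ℕ)) : Prop :=
  ∀ m ∈ I, ∀ m' : Fin n → ℕ, (∀ i, m i ≤ m' i) → m' ∈ I

/-- `m` is a minimal generator of the monomial ideal `I`. -/
def MinGen {n : ℕ} (I : Set (Fin n → ℕ)) (m : Fin n → ℕ) : Prop :=
  m ∈ I ∧ ∀ m' ∈ I, (∀ i, m' i ≤ m i) → m' = m

/-- Almost reverse lexicographic ideal. -/
def ARL {n : ℕ} (I : Set (Fin n → ℕ)) : Prop :=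
  ∀ M N : Fin n → ℕ, MinGen I N → mdeg M = mdeg N → RevLexGT M N → M ∈ I

/-- Strongly stable monomial ideal. -/
def StronglyStable {n : ℕ} (I : Set (Fin n → ℕ)) : Prop :=
  MonIdeal I ∧ ∀ M ∈ I, ∀ i j : Fin n, j < i → 0 < M i →
    (fun k => if k = i then M i - 1 else if k = j then M j + 1 else M k) ∈ I

/-- The last generator `M_ω` of a monomial ideal: a minimal generator of maximal
degree which is smallest in the degree reverse lexicographic order among the
minimal generators of that degree. -/
def IsLastGen {n : ℕ} (I : Set (Fin n → ℕ)) (W : Fin n → ℕ) : Prop :=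
  MinGen I W ∧ (∀ N, MinGen I N → mdeg N ≤ mdeg W) ∧
    (∀ N, MinGen I N → mdeg N = mdeg W → N = W ∨ RevLexGT N W)

/-- `max M`: the largest (1-based) index of a variable dividing `M` (0 for `M = 1`). -/
def maxVar {n : ℕ} (m : Fin n → ℕ) : ℕ :=
  Finset.univ.sup (fun i : Fin n => if 0 < m i then i.1 + 1 else 0)

/-- Hilbert function of `R/I`: the number of monomials of degree `d` not in `I`. -/
noncomputable def hilb {n : ℕ} (I : Set (Fin n → ℕ)) (d : ℕ) : ℕ :=
  Set.ncard {m : Fin n → ℕ | mdeg m = d ∧ m ∉ I}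

/-- Truncation of an exponent vector to its first `i` coordinates. -/
def truncW {n : ℕ} (W : Fin n → ℕ) (i : ℕ) : Fin n → ℕ :=
  fun j => if j.1 < i then W j else 0

/-- The set `𝓘_i` (for `i ≤ μ-2`): exponent vectors supported on the first `i`
coordinates, coordinatewise below the `f_j`'s, i.e. not lying in `I`. -/
def Iset {n : ℕ} (I : Set (Fin n → ℕ)) (i : ℕ) : Set (Fin n → ℕ) :=
  {α | (∀ k : Fin n, i ≤ k.1 → α k = 0) ∧ α ∉ I}

/-- The set `𝓘_{μ-1}`, which additionally requires `α ≥ (ω_1,…,ω_{μ-1})`. -/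
def IsetLast {n : ℕ} (I : Set (Fin n → ℕ)) (W : Fin n → ℕ) (μ : ℕ) :
    Set (Fin n → ℕ) :=
  {α | α ∈ Iset I (μ - 1) ∧ (α = truncW W (μ - 1) ∨ RevLexGT α (truncW W (μ - 1)))}

/-- `f_{i+1}(α) = min {t : x^α x_{i+1}^t ∈ I}` (ℕ-valued, junk `0` if no such `t`). -/
noncomputable def fmin {n : ℕ} (I : Set (Fin n → ℕ)) (α : Fin n → ℕ) (i : Fin n) : ℕ :=
  sInf {t | α + Pi.single i t ∈ I}

/-- `f_{i+1}(α)` valued in `ℕ∞` (equal to `⊤` when no power works). -/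
noncomputable def fminTop {n : ℕ} (I : Set (Fin n → ℕ)) (α : Fin n → ℕ) (i : Fin n) : ℕ∞ :=
  sInf ((fun t : ℕ => (t : ℕ∞)) '' {t | α + Pi.single i t ∈ I})

/-- Iterated truncated difference sequence `h^{(i)}`. -/
def hseq (h : ℕ → ℕ) : ℕ → ℕ → ℕ
  | 0, d => h d
  | _ + 1, 0 => 1
  | i + 1, e + 1 => hseq h i (e + 1) - hseq h i e

/-- The set whose infimum is `r_i(h)`. -/
def rset (h : ℕ → ℕ) (i : ℕ) : Set ℕ :=
  {d | 1 ≤ d ∧ hseq h i d ≤ hseq h i (d - 1)}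

/-- `D(h) = min {i : r_i < ∞}`. -/
noncomputable def Dval (h : ℕ → ℕ) : ℕ := sInf {i | (rset h i).Nonempty}

/-- `h` is unimodal at each tail. -/
def UnimodalAtTails (h : ℕ → ℕ) : Prop :=
  ∀ i, Dval h ≤ i → i < max 1 (h 1) →
    ∀ d, (∃ r ∈ rset h i, r ≤ d) → hseq h i d ≤ hseq h i (d - 1)

/-- The polynomial `Π (1 - z^{d_i})`. -/
noncomputable def froPoly (ds : List ℕ) : Polynomial ℤ :=
  (ds.map (fun d => 1 - Polynomial.X ^ d)).prod

/-- Coefficient of `z^i` in the power series `Π (1 - z^{d_i}) / (1-z)^n`. -/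
noncomputable def froCoeff (n : ℕ) (ds : List ℕ) (i : ℕ) : ℤ :=
  ∑ j ∈ Finset.range (i + 1),
    (froPoly ds).coeff j * (Nat.choose (n - 1 + (i - j)) (i - j) : ℤ)

/-- The Fröberg sequence `|n; d_1,…,d_m|`: the truncation `| · |` of the power
series `Π (1 - z^{d_i}) / (1-z)^n`. -/
noncomputable def fro (n : ℕ) (ds : List ℕ) (i : ℕ) : ℕ :=
  if ∀ j ≤ i, 0 < froCoeff n ds j then (froCoeff n ds i).toNat else 0

/-! Let `c_j(d)` be the coefficients of `∏ (1 - z^{d_i}) / (1 - z)^j`. Once `c_j` has had a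
nonpositive coefficient it stays nonpositive as long as `c_{j+1}` is positive (induction on the
list of degrees). Hence the truncations satisfy `|j|_{d+1} = |j+1|_{d+1} ∸ |j+1|_d`: the iterated
differences of `|n; d_1,…,d_m|` are the sequences `|n - i; d_1,…,d_m|`, and a weak descent of such a
sequence persists, which is unimodality at each tail.

For the ideal, the standard monomials are built degree by degree: in degree `d + 1` keep the
`|l|_{d+1}` revlex-smallest monomials all of whose divisors were kept in degree `d`. These sets are
closed under moving an exponent to a later variable, so a candidate in degree `d + 1` is uniquely
`b * x_k` with `b` kept and `k ≥ max b`; counting candidates according to their last variable turns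
the difference identity above into `#{kept monomials in x_1,…,x_j} = |j|_d`. The complement of the
kept monomials is then a monomial ideal, almost revlex by construction.
-/

open Finset

/-- `(1 - X)⁻¹ ^ max n 1`: the `n - 1` in `froCoeff` makes levels `0` and `1` agree. -/
def binomSeries (n : ℕ) : PowerSeries ℤ := PowerSeries.mk fun k => (Nat.choose (n - 1 + k) k : ℤ)

lemma froCoeff_eq_coeff (n : ℕ) (ds : List ℕ) (i : ℕ) :
    froCoeff n ds i = PowerSeries.coeff i ((froPoly ds : PowerSeries ℤ) * binomSeries n) := by
  rw [PowerSeries.coeff_mul, Nat.sum_antidiagonal_eq_sum_range_succ fun a b =>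
    PowerSeries.coeff a (froPoly ds : PowerSeries ℤ) * PowerSeries.coeff b (binomSeries n)]
  simp [froCoeff, binomSeries, Polynomial.coeff_coe]

lemma binomSeries_succ {j : ℕ} (hj : j ≠ 0) :
    binomSeries (j + 1) = binomSeries j + PowerSeries.X * binomSeries (j + 1) := by
  ext (_ | k)
  · simp [binomSeries]
  · rw [map_add, PowerSeries.coeff_succ_X_mul]
    simp only [binomSeries, PowerSeries.coeff_mk]
    rw [show j + 1 - 1 + (k + 1) = (j + k) + 1 by omega, show j - 1 + (k + 1) = j + k by omega,
      show j + 1 - 1 + k = j + k by omega, Nat.choose_succ_succ']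
    push_cast
    ring

lemma froCoeff_cons (j δ : ℕ) (tl : List ℕ) (d : ℕ) :
    froCoeff j (δ :: tl) d =
      froCoeff j tl d - if δ ≤ d then froCoeff j tl (d - δ) else 0 := by
  have : (froPoly (δ :: tl) : PowerSeries ℤ) =
      (1 - PowerSeries.X ^ δ) * (froPoly tl : PowerSeries ℤ) := by
    simp [froPoly]
  simp only [froCoeff_eq_coeff, this, sub_mul, one_mul, mul_assoc, map_sub,
    PowerSeries.coeff_X_pow_mul']

lemma froCoeff_succ_succ {j : ℕ} (hj : j ≠ 0) (ds : List ℕ) (d : ℕ) :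
    froCoeff (j + 1) ds (d + 1) = froCoeff j ds (d + 1) + froCoeff (j + 1) ds d := by
  simp only [froCoeff_eq_coeff]
  conv_lhs =>
    rw [binomSeries_succ hj, mul_add, map_add, mul_left_comm, PowerSeries.coeff_succ_X_mul]

lemma froCoeff_nil_pos (j d : ℕ) : 0 < froCoeff j [] d := by
  simp only [froCoeff_eq_coeff, froPoly, List.map_nil, List.prod_nil, Polynomial.coe_one, one_mul,
    binomSeries, PowerSeries.coeff_mk]
  exact_mod_cast Nat.choose_pos (by omega)

lemma froCoeff_zero {ds : List ℕ} (hds : ∀ δ ∈ ds, 1 ≤ δ) (n : ℕ) : froCoeff n ds 0 = 1 := by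
  induction ds with
  | nil => simp [froCoeff_eq_coeff, froPoly, binomSeries]
  | cons δ tl ih =>
    have := hds δ (by simp)
    rw [froCoeff_cons, if_neg (by omega), ih fun d hd => hds d (by simp [hd])]
    simp

def FroPosUpTo (n : ℕ) (ds : List ℕ) (d : ℕ) : Prop := ∀ e ≤ d, 0 < froCoeff n ds e

section Positivity

variable {n j δ d : ℕ} {ds tl : List ℕ}

lemma fro_of_posUpTo (h : FroPosUpTo n ds d) : fro n ds d = (froCoeff n ds d).toNat :=
  if_pos h

lemma fro_of_not_posUpTo (h : ¬FroPosUpTo n ds d) : fro n ds d = 0 :=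
  if_neg h

lemma FroPosUpTo.mono (h : FroPosUpTo n ds d) {e : ℕ} (he : e ≤ d) : FroPosUpTo n ds e :=
  fun e' he' => h e' (he'.trans he)

lemma froCoeff_succ_eq_add_sum (hj : j ≠ 0) {a b : ℕ} (hab : a ≤ b) :
    froCoeff (j + 1) ds b = froCoeff (j + 1) ds a + ∑ e ∈ Ioc a b, froCoeff j ds e := by
  induction b, hab using Nat.le_induction with
  | base => simp
  | succ b hab ih =>
    rw [froCoeff_succ_succ hj, sum_Ioc_succ_top (by omega), ih]
    ring

lemma FroPosUpTo.succ_level (hds : ∀ δ ∈ ds, 1 ≤ δ) (hj : j ≠ 0) (h : FroPosUpTo j ds d) :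
    FroPosUpTo (j + 1) ds d := fun e he => by
  rw [froCoeff_succ_eq_add_sum hj (Nat.zero_le e), froCoeff_zero hds]
  have : 0 ≤ ∑ e' ∈ Ioc 0 e, froCoeff j ds e' :=
    sum_nonneg fun e' he' => (h e' ((mem_Ioc.1 he').2.trans he)).le
  omega

lemma froCoeff_succ_strictMonoOn (hj : j ≠ 0) (h : FroPosUpTo j ds d) :
    StrictMonoOn (froCoeff (j + 1) ds) (Set.Iic d) := fun a _ b hb hab => by
  rw [froCoeff_succ_eq_add_sum hj hab.le (b := b)]
  have : 0 < ∑ e ∈ Ioc a b, froCoeff j ds e :=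
    sum_pos (fun e he => h e ((mem_Ioc.1 he).2.trans hb)) ⟨b, by simp [hab]⟩
  omega

lemma FroPosUpTo.of_cons (hδ : 1 ≤ δ) (h : FroPosUpTo n (δ :: tl) d) : FroPosUpTo n tl d := by
  intro e he
  induction e using Nat.strong_induction_on with
  | _ e ih =>
    have hc := froCoeff_cons n δ tl e
    have := h e he
    split_ifs at hc with hδe
    · have := ih (e - δ) (by omega) (by omega)
      omega
    · omega

lemma froCoeff_one_eq_one (hds : ∀ δ ∈ ds, 1 ≤ δ) (h : FroPosUpTo 1 ds d) {e : ℕ} (he : e ≤ d) :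
    froCoeff 1 ds e = 1 := by
  induction ds generalizing e with
  | nil => simp [froCoeff_eq_coeff, froPoly, binomSeries]
  | cons δ tl ih =>
    have hδ := hds δ (by simp)
    have htl : ∀ e ≤ d, froCoeff 1 tl e = 1 := fun e he =>
      ih (fun d hd => hds d (by simp [hd])) (h.of_cons hδ) he
    have hδd : d < δ := by
      by_contra hle
      have := h δ (by omega)
      rw [froCoeff_cons, if_pos le_rfl, Nat.sub_self, htl δ (by omega), htl 0 (by omega)] at this
      omega
    rw [froCoeff_cons, if_neg (by omega), htl e he]
    simp

end Positivity

section KeyLemma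

variable {j δ t : ℕ} {ds tl : List ℕ}

/-- While level `j + 1` stays positive, level `j` stays nonpositive once it has had a
nonpositive coefficient. -/
def NonposAfterDeath (ds : List ℕ) : Prop :=
  ∀ j t, j ≠ 0 → ¬FroPosUpTo j ds t → FroPosUpTo (j + 1) ds t → froCoeff j ds t ≤ 0

lemma froCoeff_succ_antitoneOn (hK : NonposAfterDeath ds) (hj : j ≠ 0) {w b : ℕ}
    (hw : ¬FroPosUpTo j ds w) (hb : FroPosUpTo (j + 1) ds b) :
    AntitoneOn (froCoeff (j + 1) ds) (Set.Icc w b) := fun a ha c hc hac => by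
  rw [froCoeff_succ_eq_add_sum hj hac]
  have : ∑ e ∈ Ioc a c, froCoeff j ds e ≤ 0 := sum_nonpos fun e he => by
    rw [mem_Ioc] at he
    exact hK j e hj (fun h => hw (h.mono (by linarith [ha.1]))) (hb.mono (by linarith [hc.2]))
  omega

lemma FroPosUpTo.sub_of_cons (hK : NonposAfterDeath tl) (hj : j ≠ 0) (hδ : 1 ≤ δ) (hδt : δ ≤ t)
    (h : FroPosUpTo (j + 1) (δ :: tl) t) : FroPosUpTo j tl (t - δ) := by
  by_contra hdead
  have hmono := froCoeff_succ_antitoneOn hK hj hdead (h.of_cons hδ)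
    ⟨le_rfl, Nat.sub_le t δ⟩ ⟨Nat.sub_le t δ, le_rfl⟩ (Nat.sub_le t δ)
  have := h t le_rfl
  rw [froCoeff_cons, if_pos hδt] at this
  omega

lemma froCoeff_cons_nonpos_of_posUpTo (hds : ∀ δ ∈ tl, 1 ≤ δ) (hK : NonposAfterDeath tl)
    (hj : j ≠ 0) (hδ : 1 ≤ δ) (hdead : ¬FroPosUpTo j (δ :: tl) t) (htl : FroPosUpTo j tl t) :
    froCoeff j (δ :: tl) t ≤ 0 := by
  obtain ⟨e₀, he₀, hdip⟩ : ∃ e₀ ≤ t, froCoeff j (δ :: tl) e₀ ≤ 0 := by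
    simpa [FroPosUpTo] using hdead
  rw [froCoeff_cons] at hdip ⊢
  have hδe₀ : δ ≤ e₀ := by
    by_contra hlt
    rw [if_neg hlt] at hdip
    have := htl e₀ he₀
    omega
  rw [if_pos hδe₀] at hdip
  rw [if_pos (hδe₀.trans he₀)]
  obtain _ | _ | i := j
  · exact absurd rfl hj
  · rw [froCoeff_one_eq_one hds htl le_rfl, froCoeff_one_eq_one hds htl (Nat.sub_le t δ)]
    simp
  have hdead_i : ¬FroPosUpTo (i + 1) tl e₀ := fun h => by
    have := froCoeff_succ_strictMonoOn i.add_one_ne_zero h (Set.mem_Iic.2 (Nat.sub_le e₀ δ))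
      (Set.mem_Iic.2 le_rfl) (by omega : e₀ - δ < e₀)
    omega
  by_cases hpos : FroPosUpTo (i + 1) tl (t - δ)
  · have h1 := froCoeff_succ_antitoneOn hK i.add_one_ne_zero hdead_i htl ⟨le_rfl, he₀⟩
      ⟨he₀, le_rfl⟩ he₀
    have h2 := (froCoeff_succ_strictMonoOn i.add_one_ne_zero hpos).monotoneOn
      (Set.mem_Iic.2 (by omega : e₀ - δ ≤ t - δ)) (Set.mem_Iic.2 le_rfl) (by omega)
    omega
  · have := froCoeff_succ_antitoneOn hK i.add_one_ne_zero hpos htl ⟨le_rfl, Nat.sub_le t δ⟩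
      ⟨Nat.sub_le t δ, le_rfl⟩ (Nat.sub_le t δ)
    omega

theorem nonposAfterDeath (hds : ∀ δ ∈ ds, 1 ≤ δ) : NonposAfterDeath ds := by
  induction ds with
  | nil => exact fun j t _ hdead _ => absurd (fun e _ => froCoeff_nil_pos j e) hdead
  | cons δ tl ih =>
    intro j t hj hdead halive
    have hδ := hds δ (by simp)
    have hds' : ∀ d ∈ tl, 1 ≤ d := fun d hd => hds d (by simp [hd])
    have hK := ih hds'
    by_cases htl : FroPosUpTo j tl t
    · exact froCoeff_cons_nonpos_of_posUpTo hds' hK hj hδ hdead htl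
    · have := hK j t hj htl (halive.of_cons hδ)
      rw [froCoeff_cons]
      split_ifs with hδt
      · have := halive.sub_of_cons hK hj hδ hδt (t - δ) le_rfl
        omega
      · omega

end KeyLemma

section FrobergSequence

variable {ds : List ℕ} {n j l d : ℕ}

lemma fro_pos_iff : 0 < fro n ds d ↔ FroPosUpTo n ds d := by
  by_cases h : FroPosUpTo n ds d
  · have := h d le_rfl
    simp only [fro_of_posUpTo h, h, iff_true]
    omega
  · simp [fro_of_not_posUpTo h, h]

lemma fro_succ_eq_zero (h : fro n ds d = 0) : fro n ds (d + 1) = 0 :=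
  fro_of_not_posUpTo fun hpos => by
    have := fro_pos_iff.2 (hpos.mono d.le_succ)
    omega

lemma fro_zero (hds : ∀ δ ∈ ds, 1 ≤ δ) (n : ℕ) : fro n ds 0 = 1 := by
  have hpos : FroPosUpTo n ds 0 := fun e he => by
    rw [Nat.le_zero.1 he, froCoeff_zero hds]
    exact one_pos
  rw [fro_of_posUpTo hpos, froCoeff_zero hds]
  rfl

lemma fro_one_succ_le (hds : ∀ δ ∈ ds, 1 ≤ δ) (d : ℕ) : fro 1 ds (d + 1) ≤ fro 1 ds d := by
  by_cases h : FroPosUpTo 1 ds (d + 1)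
  · rw [fro_of_posUpTo h, fro_of_posUpTo (h.mono d.le_succ), froCoeff_one_eq_one hds h le_rfl,
      froCoeff_one_eq_one hds h d.le_succ]
  · rw [fro_of_not_posUpTo h]
    exact Nat.zero_le _

theorem fro_succ_eq_sub (hds : ∀ δ ∈ ds, 1 ≤ δ) (hj : j ≠ 0) (d : ℕ) :
    fro j ds (d + 1) = fro (j + 1) ds (d + 1) - fro (j + 1) ds d := by
  have hrec := froCoeff_succ_succ hj ds d
  by_cases h : FroPosUpTo j ds (d + 1)
  · have h' := h.succ_level hds hj
    rw [fro_of_posUpTo h, fro_of_posUpTo h', fro_of_posUpTo (h'.mono d.le_succ)]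
    have := h (d + 1) le_rfl
    have := h' d d.le_succ
    omega
  rw [fro_of_not_posUpTo h]
  by_cases h' : FroPosUpTo (j + 1) ds (d + 1)
  · have := nonposAfterDeath hds j (d + 1) hj h h'
    rw [fro_of_posUpTo h', fro_of_posUpTo (h'.mono d.le_succ)]
    omega
  · rw [fro_of_not_posUpTo h', Nat.zero_sub]

lemma fro_eq_sub_sum (hds : ∀ δ ∈ ds, 1 ≤ δ) (hj : j ≠ 0) (hjl : j ≤ l) (d : ℕ) :
    fro j ds (d + 1) = fro l ds (d + 1) - ∑ i ∈ Ioc j l, fro i ds d := by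
  induction l, hjl using Nat.le_induction with
  | base => simp
  | succ l hjl ih =>
    rw [sum_Ioc_succ_top hjl, ih, fro_succ_eq_sub hds (by omega) d]
    omega

lemma fro_le_sum (hds : ∀ δ ∈ ds, 1 ≤ δ) (hl : l ≠ 0) (d : ℕ) :
    fro l ds (d + 1) ≤ ∑ i ∈ Ioc 0 l, fro i ds d := by
  have h := fro_eq_sub_sum hds one_ne_zero (Nat.one_le_iff_ne_zero.2 hl) d
  have h1 := fro_one_succ_le hds d
  rw [← sum_Ioc_consecutive _ zero_le_one (Nat.one_le_iff_ne_zero.2 hl),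
    show Ioc 0 1 = {1} from rfl, sum_singleton]
  omega

lemma fro_le_fro_pred_of_le (hds : ∀ δ ∈ ds, 1 ≤ δ) (hj : j ≠ 0) {r : ℕ} (hr : 1 ≤ r)
    (hdip : fro j ds r ≤ fro j ds (r - 1)) (hrd : r ≤ d) : fro j ds d ≤ fro j ds (d - 1) := by
  induction d, hrd using Nat.le_induction with
  | base => exact hdip
  | succ d hrd ih =>
    obtain _ | _ | i := j
    · contradiction
    · exact fro_one_succ_le hds d
    have hstep := fro_succ_eq_sub hds i.add_one_ne_zero (d - 1)
    rw [Nat.sub_add_cancel (hr.trans hrd)] at hstep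
    have hzero := fro_succ_eq_zero (show fro (i + 1) ds d = 0 by omega)
    have := fro_succ_eq_sub hds i.add_one_ne_zero d
    simp only [Nat.add_sub_cancel]
    omega

lemma fro_max_one (n : ℕ) : fro (max n 1) ds = fro n ds := by
  rcases Nat.eq_zero_or_pos n with rfl | hn
  · rfl
  · rw [max_eq_left hn]

lemma hseq_fro (hds : ∀ δ ∈ ds, 1 ≤ δ) {i : ℕ} (hi : i < l) :
    hseq (fro l ds) i = fro (l - i) ds := by
  induction i with
  | zero => rfl
  | succ i ih =>
    funext d
    cases d with
    | zero => simp [hseq, fro_zero hds]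
    | succ e =>
      rw [hseq, ih (by omega), fro_succ_eq_sub hds (by omega : l - (i + 1) ≠ 0),
        show l - (i + 1) + 1 = l - i by omega]

lemma antitone_hseq_succ {h : ℕ → ℕ} {i : ℕ} (hi : Antitone (hseq h i)) :
    Antitone (hseq h (i + 1)) :=
  antitone_nat_of_succ_le fun d => by
    cases d with
    | zero => exact (Nat.sub_eq_zero_of_le (hi (Nat.zero_le 1))).trans_le (Nat.zero_le _)
    | succ d => exact (Nat.sub_eq_zero_of_le (hi d.succ.le_succ)).trans_le (Nat.zero_le _)

lemma antitone_hseq_fro (hds : ∀ δ ∈ ds, 1 ≤ δ) (hl : l ≠ 0) {i : ℕ} (hi : l - 1 ≤ i) :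
    Antitone (hseq (fro l ds) i) := by
  induction i, hi using Nat.le_induction with
  | base =>
    rw [hseq_fro hds (by omega), show l - (l - 1) = 1 by omega]
    exact antitone_nat_of_succ_le (fro_one_succ_le hds)
  | succ i _ ih => exact antitone_hseq_succ ih

theorem unimodalAtTails_fro (hds : ∀ δ ∈ ds, 1 ≤ δ) (n : ℕ) : UnimodalAtTails (fro n ds) := by
  rintro i - - d ⟨r, ⟨hr, hdip⟩, hrd⟩
  rw [← fro_max_one] at hdip ⊢
  rcases lt_or_ge i (max n 1) with hi | hi
  · rw [hseq_fro hds hi] at hdip ⊢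
    exact fro_le_fro_pred_of_le hds (by omega) hr hdip hrd
  · exact antitone_hseq_fro hds (by omega) (by omega) (Nat.sub_le d 1)

end FrobergSequence

namespace Finset

variable {α : Type*} [DecidableEq α] (r : α → α → Prop) [DecidableRel r] [IsTrans α r]
  [Std.Antisymm r] [Std.Total r]

def lowest (S : Finset α) (s : ℕ) : Finset α := ((S.sort r).take s).toFinset

variable {r} {S : Finset α} {s : ℕ} {x y : α}

lemma lowest_subset : S.lowest r s ⊆ S := fun _ hx =>
  (mem_sort r).1 (List.mem_of_mem_take (List.mem_toFinset.1 hx))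

lemma card_lowest : #(S.lowest r s) = min s #S := by
  rw [lowest, List.toFinset_card_of_nodup ((sort_nodup S r).sublist (List.take_sublist _ _)),
    List.length_take, length_sort]

lemma rel_of_mem_lowest (hx : x ∈ S.lowest r s) (hy : y ∈ S) (hy' : y ∉ S.lowest r s) :
    r x y := by
  have hpw := pairwise_sort S r
  rw [← List.take_append_drop s (S.sort r), List.pairwise_append] at hpw
  refine hpw.2.2 x (List.mem_toFinset.1 hx) y ?_
  have hy : y ∈ (S.sort r).take s ++ (S.sort r).drop s := by
    rw [List.take_append_drop]; exact (mem_sort r).2 hy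
  exact (List.mem_append.1 hy).resolve_left fun h => hy' (List.mem_toFinset.2 h)

lemma mem_lowest_of_rel (hy : y ∈ S.lowest r s) (hx : x ∈ S) (hxy : r x y) :
    x ∈ S.lowest r s := by
  by_contra hx'
  rw [Std.Antisymm.antisymm x y hxy (rel_of_mem_lowest hy hx hx')] at hx'
  exact hx' hy

lemma card_filter_lowest {p : α → Prop} [DecidablePred p]
    (hp : ∀ y ∈ S, p y → ∀ x ∈ S, r x y → p x) :
    #((S.lowest r s).filter p) = min s #(S.filter p) := by
  -- both are initial segments of `S`, hence nested
  have hST : S.filter p ⊆ S.lowest r s ∨ S.lowest r s ⊆ S.filter p := by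
    by_contra! h
    obtain ⟨t, ht, ht'⟩ := not_subset.1 h.1
    obtain ⟨b, hb, hb'⟩ := not_subset.1 h.2
    rw [mem_filter] at ht hb'
    exact hb' ⟨lowest_subset hb, hp t ht.1 ht.2 b (lowest_subset hb)
      (rel_of_mem_lowest hb ht.1 ht')⟩
  have hcard := card_lowest (r := r) (S := S) (s := s)
  have hle := card_le_card (filter_subset p S)
  rcases hST with h | h
  · have hfilter : (S.lowest r s).filter p = S.filter p := by
      ext x
      simp only [mem_filter]
      exact ⟨fun hx => ⟨lowest_subset hx.1, hx.2⟩, fun hx => ⟨h (mem_filter.2 hx), hx.2⟩⟩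
    have := card_le_card h
    rw [hfilter]
    omega
  · rw [filter_true_of_mem fun x hx => (mem_filter.1 (h hx)).2]
    have := card_le_card h
    omega

end Finset

section Monomials

variable {l j : ℕ} {m M N b : Fin l → ℕ} {i k : Fin l}

lemma mdeg_add_single (m : Fin l → ℕ) (k : Fin l) (c : ℕ) :
    mdeg (m + Pi.single k c) = mdeg m + c := by
  simp [mdeg, sum_add_distrib]

lemma sub_single_add_single (h : 0 < m i) : m - Pi.single i 1 + Pi.single i 1 = m := by
  funext t
  rcases eq_or_ne t i with rfl | ht <;> simp [*]
  omega

lemma apply_le_mdeg (m : Fin l → ℕ) (i : Fin l) : m i ≤ mdeg m :=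
  single_le_sum (fun _ _ => Nat.zero_le _) (mem_univ i)

lemma mdeg_ne_zero (hm : m ≠ 0) : mdeg m ≠ 0 := by
  obtain ⟨i, hi⟩ := Function.ne_iff.1 hm
  have := apply_le_mdeg m i
  simp only [Pi.zero_apply] at hi
  omega

lemma mdeg_sub_single (h : 0 < m i) : mdeg (m - Pi.single i 1) = mdeg m - 1 := by
  conv_rhs => rw [← sub_single_add_single h, mdeg_add_single]
  rfl

lemma mem_of_le_of_sub_single_mem {U : Set (Fin l → ℕ)}
    (hU : ∀ m ∈ U, ∀ i, 0 < m i → m - Pi.single i 1 ∈ U) {m m' : Fin l → ℕ} (hle : m ≤ m')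
    (hm' : m' ∈ U) : m ∈ U := by
  induction m' using WellFoundedLT.induction with
  | _ m' ih =>
    rcases hle.eq_or_lt with rfl | hlt
    · exact hm'
    obtain ⟨i, hi⟩ : ∃ i, m i < m' i := Pi.lt_def.1 hlt |>.2
    refine ih (m' - Pi.single i 1) ?_ (fun t => ?_) (hU m' hm' i (by omega))
    · exact Pi.lt_def.2 ⟨fun t => Nat.sub_le _ _, i, by simp; omega⟩
    · rcases eq_or_ne t i with rfl | ht
      · simp
        omega
      · simpa [ht] using hle t

/-- Degree reverse lexicographic order as a lexicographic product, to inherit a linear order. -/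
def revKey (m : Fin l → ℕ) : ℕ ×ₗ (Colex (Fin l → ℕ))ᵒᵈ :=
  toLex (mdeg m, OrderDual.toDual (toColex m))

lemma revKey_injective : Function.Injective (revKey (l := l)) := fun M N h => by
  simpa [revKey] using congrArg (fun p => ofColex (OrderDual.ofDual (ofLex p).2)) h

lemma revLexGT_iff_revKey_lt : RevLexGT M N ↔ revKey N < revKey M := by
  simp only [RevLexGT, revKey, Prod.Lex.toLex_lt_toLex, OrderDual.toDual_lt_toDual,
    eq_comm (a := mdeg M)]
  rfl

def RevLexLE (M N : Fin l → ℕ) : Prop := revKey M ≤ revKey N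

instance : IsTrans (Fin l → ℕ) RevLexLE := ⟨fun _ _ _ => le_trans⟩
instance : Std.Antisymm (RevLexLE (l := l)) :=
  ⟨fun _ _ h h' => revKey_injective (le_antisymm h h')⟩
instance : Std.Total (RevLexLE (l := l)) := ⟨fun _ _ => le_total _ _⟩

lemma revLexLE_iff : RevLexLE M N ↔ M = N ∨ RevLexGT N M := by
  rw [revLexGT_iff_revKey_lt, RevLexLE, le_iff_eq_or_lt, revKey_injective.eq_iff]

lemma not_revLexLE_of_revLexGT (h : RevLexGT M N) : ¬RevLexLE M N :=
  not_le.2 (revLexGT_iff_revKey_lt.1 h)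

lemma revLexGT_shift (hik : i < k) (hi : 0 < m i) :
    RevLexGT m (m - Pi.single i 1 + Pi.single k 1) := by
  refine Or.inr ⟨?_, k, fun t ht => ?_, ?_⟩
  · rw [mdeg_add_single, mdeg_sub_single hi]
    have := apply_le_mdeg m i
    omega
  · simp [ht.ne', (hik.trans ht).ne']
  · simp [hik.ne']

lemma maxVar_le_iff : maxVar m ≤ j ↔ ∀ i : Fin l, 0 < m i → i.1 + 1 ≤ j := by
  simp only [maxVar, Finset.sup_le_iff, mem_univ, true_implies]
  refine forall_congr' fun i => ?_
  split_ifs with h <;> simp [h]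

lemma le_maxVar (h : 0 < m i) : i.1 + 1 ≤ maxVar m :=
  (if_pos h).symm.trans_le
    (le_sup (f := fun i : Fin l => if 0 < m i then i.1 + 1 else 0) (mem_univ i))

lemma maxVar_le (m : Fin l → ℕ) : maxVar m ≤ l :=
  maxVar_le_iff.2 fun i _ => i.2

lemma apply_eq_zero_of_maxVar_le (h : maxVar m ≤ i.1) : m i = 0 := by
  by_contra hi
  have := le_maxVar (Nat.pos_of_ne_zero hi)
  omega

lemma exists_maxVar_eq (h : 0 < maxVar m) : ∃ k : Fin l, maxVar m = k.1 + 1 ∧ 0 < m k := by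
  have : ¬maxVar m ≤ maxVar m - 1 := by omega
  simp only [maxVar_le_iff, not_forall, not_le] at this
  obtain ⟨k, hk, hlt⟩ := this
  exact ⟨k, le_antisymm (by omega) (le_maxVar hk), hk⟩

lemma maxVar_pos (hm : m ≠ 0) : 0 < maxVar m := by
  obtain ⟨i, hi⟩ := Function.ne_iff.1 hm
  exact (Nat.succ_pos _).trans_le (le_maxVar (Nat.pos_of_ne_zero hi))

lemma maxVar_add_single (h : maxVar b ≤ k.1 + 1) : maxVar (b + Pi.single k 1) = k.1 + 1 := by
  refine le_antisymm (maxVar_le_iff.2 fun i hi => ?_) (le_maxVar (by simp))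
  rcases eq_or_ne i k with rfl | hik
  · exact le_rfl
  · exact (le_maxVar (by simpa [hik] using hi)).trans h

lemma maxVar_shift_le (hb : maxVar b ≤ j) (hk : k.1 + 1 ≤ j) :
    maxVar (b - Pi.single i 1 + Pi.single k 1) ≤ j := maxVar_le_iff.2 fun t ht => by
  rcases eq_or_ne t k with rfl | htk
  · exact hk
  · exact (le_maxVar (show 0 < b t by simp [htk] at ht; omega)).trans hb

lemma maxVar_le_of_revLexGT (hdeg : mdeg M = mdeg N) (hN : maxVar N ≤ j) (h : RevLexGT M N) :
    maxVar M ≤ j := by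
  by_contra hM
  obtain ⟨t, ht, hMt⟩ := exists_maxVar_eq (m := M) (by omega)
  have hNM : RevLexGT N M := Or.inr ⟨hdeg.symm, t, fun u hu => ?_, ?_⟩
  · exact not_revLexLE_of_revLexGT hNM (revLexLE_iff.2 (Or.inr h))
  · rw [apply_eq_zero_of_maxVar_le (m := N) (by have : t < u := hu; omega),
      apply_eq_zero_of_maxVar_le (m := M) (by have : t < u := hu; omega)]
  · rwa [apply_eq_zero_of_maxVar_le (m := N) (by omega)]

end Monomials

section Extensions

variable {l : ℕ} {B : Finset (Fin l → ℕ)} {m : Fin l → ℕ}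

/-- For shift-closed `B`, exactly the monomials all of whose divisors lie in `B`, each of them
obtained once, as `b * x_k` with `k ≥ max b`. -/
def extensions (B : Finset (Fin l → ℕ)) : Finset (Fin l → ℕ) :=
  B.biUnion fun b => (univ.filter fun k : Fin l => maxVar b ≤ k.1 + 1).image
    fun k => b + Pi.single k 1

lemma mem_extensions :
    m ∈ extensions B ↔ ∃ b ∈ B, ∃ k : Fin l, maxVar b ≤ k.1 + 1 ∧ b + Pi.single k 1 = m := by
  simp [extensions]

/-- The complement of `B` among the monomials of its degree is strongly stable. -/
def ShiftClosed (B : Finset (Fin l → ℕ)) : Prop :=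
  ∀ m ∈ B, ∀ i k : Fin l, i < k → 0 < m i → m - Pi.single i 1 + Pi.single k 1 ∈ B

lemma ShiftClosed.lowest {S : Finset (Fin l → ℕ)} (hS : ShiftClosed S) (s : ℕ) :
    ShiftClosed (S.lowest RevLexLE s) := fun m hm i k hik hi =>
  mem_lowest_of_rel hm (hS m (lowest_subset hm) i k hik hi)
    (revLexLE_iff.2 (Or.inr (revLexGT_shift hik hi)))

lemma add_single_sub_single {b : Fin l → ℕ} {i g : Fin l} (hig : i ≠ g) :
    b + Pi.single g 1 - Pi.single i 1 = b - Pi.single i 1 + Pi.single g 1 := by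
  funext t
  rcases eq_or_ne t i with rfl | hti <;> simp [*]

lemma ShiftClosed.extensions (hB : ShiftClosed B) : ShiftClosed (extensions B) := by
  rintro _ hm i k hik hi
  obtain ⟨b, hb, g, hbg, rfl⟩ := mem_extensions.1 hm
  rcases eq_or_ne i g with rfl | hig
  · rw [add_tsub_cancel_right]
    exact mem_extensions.2 ⟨b, hb, k, hbg.trans (by have : i.1 < k.1 := hik; omega), rfl⟩
  have hbi : 0 < b i := by simpa [hig] using hi
  have hig' : i < g := by
    have := le_maxVar hbi
    exact lt_of_le_of_ne (Fin.le_def.2 (by omega)) hig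
  have hsingles : Pi.single g 1 + Pi.single k 1 =
      (Pi.single (min k g) 1 + Pi.single (max k g) 1 : Fin l → ℕ) := by
    rcases le_total k g with h | h <;> simp [h, add_comm]
  refine mem_extensions.2 ⟨b - Pi.single i 1 + Pi.single (min k g) 1,
    hB b hb i _ (lt_min hik hig') hbi, max k g, maxVar_shift_le (hbg.trans ?_) ?_, ?_⟩
  · simp
  · simp
  · rw [add_single_sub_single hig, add_assoc, add_assoc, hsingles]

lemma sub_single_mem_of_mem_extensions (hB : ShiftClosed B) (hm : m ∈ extensions B) {i : Fin l}
    (hi : 0 < m i) : m - Pi.single i 1 ∈ B := by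
  obtain ⟨b, hb, g, hbg, rfl⟩ := mem_extensions.1 hm
  rcases eq_or_ne i g with rfl | hig
  · rwa [add_tsub_cancel_right]
  have hbi : 0 < b i := by simpa [hig] using hi
  have hig' : i < g := by
    have := le_maxVar hbi
    exact lt_of_le_of_ne (Fin.le_def.2 (by omega)) hig
  rw [add_single_sub_single hig]
  exact hB b hb i g hig' hbi

lemma mem_extensions_of_sub_single_mem (hm : m ≠ 0)
    (h : ∀ i, 0 < m i → m - Pi.single i 1 ∈ B) : m ∈ extensions B := by
  obtain ⟨g, hg, hmg⟩ := exists_maxVar_eq (maxVar_pos hm)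
  refine mem_extensions.2 ⟨m - Pi.single g 1, h g hmg, g, ?_, sub_single_add_single hmg⟩
  exact hg ▸ maxVar_le_iff.2 fun i hi => le_maxVar (m := m) (by simp at hi; omega)

lemma maxVar_pos_of_mem_extensions (hm : m ∈ extensions B) : 0 < maxVar m := by
  obtain ⟨b, -, k, hbk, rfl⟩ := mem_extensions.1 hm
  rw [maxVar_add_single hbk]
  exact k.1.succ_pos

lemma mdeg_of_mem_extensions {d : ℕ} (hB : ∀ b ∈ B, mdeg b = d) (hm : m ∈ extensions B) :
    mdeg m = d + 1 := by
  obtain ⟨b, hb, k, -, rfl⟩ := mem_extensions.1 hm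
  rw [mdeg_add_single, hB b hb]

lemma card_filter_maxVar_eq_extensions (B : Finset (Fin l → ℕ)) (k : Fin l) :
    #((extensions B).filter (maxVar · = k.1 + 1)) = #(B.filter (maxVar · ≤ k.1 + 1)) := by
  have hdecomp : ∀ m ∈ (extensions B).filter (maxVar · = k.1 + 1),
      ∃ b ∈ B, maxVar b ≤ k.1 + 1 ∧ b + Pi.single k 1 = m := by
    intro m hm
    obtain ⟨⟨b, hb, g, hbg, rfl⟩, hmk⟩ := And.imp_left mem_extensions.1 (mem_filter.1 hm)
    obtain rfl : g = k := Fin.ext (by rw [maxVar_add_single hbg] at hmk; omega)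
    exact ⟨b, hb, hbg, rfl⟩
  symm
  refine card_nbij' (· + Pi.single k 1) (· - Pi.single k 1) (fun b hb => ?_) (fun m hm => ?_)
    (fun b _ => add_tsub_cancel_right b _) (fun m hm => ?_)
  · obtain ⟨hb, hbk⟩ := mem_filter.1 hb
    exact mem_filter.2 ⟨mem_extensions.2 ⟨b, hb, k, hbk, rfl⟩, maxVar_add_single hbk⟩
  · obtain ⟨b, hb, hbk, rfl⟩ := hdecomp m hm
    simpa [add_tsub_cancel_right] using And.intro hb hbk
  · obtain ⟨b, -, -, rfl⟩ := hdecomp m hm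
    simp only [add_tsub_cancel_right]

lemma card_filter_maxVar_le_extensions (B : Finset (Fin l → ℕ)) {J : ℕ} (hJ : J ≤ l) :
    #((extensions B).filter (maxVar · ≤ J)) = ∑ j ∈ Ioc 0 J, #(B.filter (maxVar · ≤ j)) := by
  rw [card_eq_sum_card_fiberwise (f := maxVar) (t := Ioc 0 J) fun m hm => ?_]
  · refine sum_congr rfl fun j hj => ?_
    obtain ⟨hj0, hjJ⟩ := mem_Ioc.1 hj
    obtain ⟨k, rfl⟩ : ∃ k : Fin l, k.1 + 1 = j := ⟨⟨j - 1, by omega⟩, by simp; omega⟩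
    rw [filter_filter, ← card_filter_maxVar_eq_extensions]
    congr 1
    exact filter_congr fun m _ => ⟨fun h => h.2, fun h => ⟨h ▸ hjJ, h⟩⟩
  · obtain ⟨hm, hmJ⟩ := mem_filter.1 hm
    exact mem_Ioc.2 ⟨maxVar_pos_of_mem_extensions hm, hmJ⟩

end Extensions

section FrobergIdeal

variable {l : ℕ} {ds : List ℕ} {d : ℕ} {m : Fin l → ℕ}

noncomputable def stdMonomials (l : ℕ) (ds : List ℕ) : ℕ → Finset (Fin l → ℕ)
  | 0 => {0}
  | d + 1 => (extensions (stdMonomials l ds d)).lowest RevLexLE (fro l ds (d + 1))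

lemma mdeg_of_mem_stdMonomials (hm : m ∈ stdMonomials l ds d) : mdeg m = d := by
  induction d generalizing m with
  | zero => simp [mem_singleton.1 hm, mdeg]
  | succ d ih => exact mdeg_of_mem_extensions (fun b hb => ih hb) (lowest_subset hm)

lemma shiftClosed_stdMonomials (l : ℕ) (ds : List ℕ) (d : ℕ) :
    ShiftClosed (stdMonomials l ds d) := by
  induction d with
  | zero =>
    intro m hm i _ _ hi
    simp [mem_singleton.1 hm] at hi
  | succ d ih => exact ih.extensions.lowest _

lemma card_filter_stdMonomials (hds : ∀ δ ∈ ds, 1 ≤ δ) {j : ℕ} (hj : j ≠ 0) (hjl : j ≤ l) :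
    #((stdMonomials l ds d).filter (maxVar · ≤ j)) = fro j ds d := by
  induction d generalizing j with
  | zero =>
    rw [stdMonomials, filter_singleton, if_pos, card_singleton, fro_zero hds]
    exact (maxVar_le_iff.2 fun i hi => absurd hi (lt_irrefl 0)).trans (Nat.zero_le j)
  | succ d ih =>
    rw [stdMonomials]
    set N := extensions (stdMonomials l ds d)
    have hN : ∀ J ≤ l, #(N.filter (maxVar · ≤ J)) = ∑ i ∈ Ioc 0 J, fro i ds d := fun J hJ => by
      rw [card_filter_maxVar_le_extensions _ hJ]
      exact sum_congr rfl fun i hi => ih (mem_Ioc.1 hi).1.ne' ((mem_Ioc.1 hi).2.trans hJ)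
    have hNcard : #N = ∑ i ∈ Ioc 0 l, fro i ds d := by
      rw [← hN l le_rfl, filter_true_of_mem fun m _ => maxVar_le m]
    have hlarge : #(N.filter (¬maxVar · ≤ j)) = ∑ i ∈ Ioc j l, fro i ds d := by
      have := card_filter_add_card_filter_not (s := N) (maxVar · ≤ j)
      rw [hN j hjl, hNcard, ← sum_Ioc_consecutive _ (Nat.zero_le j) hjl] at this
      omega
    -- the monomials using a variable beyond `x_j` are revlex-smallest, so `lowest` takes them first
    have hlower : ∀ y ∈ N, ¬maxVar y ≤ j → ∀ x ∈ N, RevLexLE x y → ¬maxVar x ≤ j := by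
      intro y hy hyj x hx hxy hxj
      rcases revLexLE_iff.1 hxy with rfl | hyx
      · exact hyj hxj
      · have hdeg : ∀ m ∈ N, mdeg m = d + 1 := fun m hm =>
          mdeg_of_mem_extensions (fun b hb => mdeg_of_mem_stdMonomials hb) hm
        exact hyj (maxVar_le_of_revLexGT ((hdeg y hy).trans (hdeg x hx).symm) hxj hyx)
    have hsplit :=
      card_filter_add_card_filter_not (s := N.lowest RevLexLE (fro l ds (d + 1))) (maxVar · ≤ j)
    rw [card_filter_lowest hlower, card_lowest, hlarge] at hsplit
    have hfeas := fro_le_sum hds (l := l) (by omega) d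
    have hiter := fro_eq_sub_sum hds hj hjl d
    omega

lemma card_stdMonomials (hds : ∀ δ ∈ ds, 1 ≤ δ) (hl : l ≠ 0) (d : ℕ) :
    #(stdMonomials l ds d) = fro l ds d := by
  rw [← card_filter_stdMonomials hds hl le_rfl, filter_true_of_mem fun m _ => maxVar_le m]

lemma sub_single_mem_stdMonomials (hm : m ∈ stdMonomials l ds (d + 1)) {i : Fin l}
    (hi : 0 < m i) : m - Pi.single i 1 ∈ stdMonomials l ds d :=
  sub_single_mem_of_mem_extensions (shiftClosed_stdMonomials l ds d) (lowest_subset hm) hi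

def froIdeal (l : ℕ) (ds : List ℕ) : Set (Fin l → ℕ) := {m | m ∉ stdMonomials l ds (mdeg m)}

lemma mem_froIdeal : m ∈ froIdeal l ds ↔ m ∉ stdMonomials l ds (mdeg m) := Iff.rfl

theorem monIdeal_froIdeal : MonIdeal (froIdeal l ds) := by
  intro m hm m' hle hm'
  refine hm (mem_of_le_of_sub_single_mem (U := {m | m ∈ stdMonomials l ds (mdeg m)})
    (fun m hm i hi => ?_) hle hm')
  have hdeg : mdeg m = mdeg (m - Pi.single i 1) + 1 := by
    have := apply_le_mdeg m i
    rw [mdeg_sub_single hi]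
    omega
  exact sub_single_mem_stdMonomials (hdeg ▸ (hm : m ∈ stdMonomials l ds (mdeg m))) hi

theorem hilb_froIdeal (hds : ∀ δ ∈ ds, 1 ≤ δ) (hl : l ≠ 0) (d : ℕ) :
    hilb (froIdeal l ds) d = fro l ds d := by
  have : {m | mdeg m = d ∧ m ∉ froIdeal l ds} = ↑(stdMonomials l ds d) := by
    ext m
    simp only [Set.mem_ofPred_eq, mem_froIdeal, not_not, mem_coe]
    exact ⟨fun ⟨hd, hm⟩ => hd ▸ hm,
      fun hm => ⟨mdeg_of_mem_stdMonomials hm, (mdeg_of_mem_stdMonomials hm).symm ▸ hm⟩⟩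
  rw [hilb, this, Set.ncard_coe_finset, card_stdMonomials hds hl]

theorem arl_froIdeal : ARL (froIdeal l ds) := by
  rintro M N ⟨hN, hNmin⟩ hdeg hMN
  have hN0 : N ≠ 0 := by
    rintro rfl
    exact hN (by simp [stdMonomials, mdeg])
  obtain ⟨d, hd⟩ : ∃ d, mdeg N = d + 1 := Nat.exists_eq_succ_of_ne_zero (mdeg_ne_zero hN0)
  have hdiv : ∀ i, 0 < N i → N - Pi.single i 1 ∈ stdMonomials l ds d := fun i hi => by
    by_contra hout
    have := congrFun (hNmin (N - Pi.single i 1)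
      (by rwa [mem_froIdeal, mdeg_sub_single hi, hd]) fun t => Nat.sub_le _ _) i
    simp at this
    omega
  -- minimality puts `N` among the candidates of degree `d + 1`, where it lost to `M`
  intro hM
  rw [hdeg, hd] at hM
  rw [mem_froIdeal, hd] at hN
  exact not_revLexLE_of_revLexGT hMN
    (rel_of_mem_lowest hM (mem_extensions_of_sub_single_mem hN0 hdiv) hN)

end FrobergIdeal

/-- Every Fröberg sequence is the Hilbert function of `R/K` for an
almost reverse lexicographic ideal `K` in `k[x_1,…,x_l]` (`l = n` if `n ≥ 1`,
`l = 1` if `n = 0`); in particular it is unimodal at each tail. -/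
theorem fro_realizable_by_arl (n : ℕ) (ds : List ℕ) (hds : ∀ d ∈ ds, 1 ≤ d) :
    (∃ K : Set (Fin (max n 1) → ℕ),
        MonIdeal K ∧ ARL K ∧ ∀ d, hilb K d = fro n ds d) ∧
    UnimodalAtTails (fro n ds) := by
  refine ⟨⟨froIdeal (max n 1) ds, monIdeal_froIdeal, arl_froIdeal, fun d => ?_⟩,
    unimodalAtTails_fro hds n⟩
  rw [hilb_froIdeal hds (by omega), fro_max_one]
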